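/- arXiv:1510.01844 — 3 statements merged into one kernel-verified Lean document; each statement's English description precedes it below -/
import Mathlib

section
/- For every pmf R on 𝒳 and every pmf P on 𝒳 with P(x)>0 for all x, D(R||P) ≥ (min_{x∈𝒳} P(x)) · χ²(R||P). -/
/-!
Pinsker's inequality for an event, `D(R‖P) ≥ 2 (R(A) - P(A))²`, taken at `A = {R ≥ P}`,
bounds `D(R‖P)` below by `2 ‖(R - P)⁺‖₁²`. As `R - P` sums to zero, its positive and negative
parts have the same mass, so `∑ (R - P)² ≤ 2 ‖(R - P)⁺‖₁²`; and `min P · χ²(R‖P) ≤ ∑ (R - P)²`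
termwise.

Pinsker for an event comes from the log-sum inequality, which coarse-grains `D(R‖P)` to the
binary divergence of `(R(A), P(A))`, and from the binary case: for `b ≤ a`,
`∂ₐ [d(a‖b) - 2 (a - b)²] = ψ a - ψ b` with `ψ x = log (x / (1 - x)) - 4 x`, which is
increasing since `x (1 - x) ≤ 1/4`.
-/

/-- A probability mass function on a finite set. -/
def IsPmf {𝒳 : Type*} [Fintype 𝒳] (P : 𝒳 → ℝ) : Prop :=
  (∀ x, 0 ≤ P x) ∧ ∑ x, P x = 1

/-- KL divergence `D(R‖P) = ∑ₓ R(x) log(R(x)/P(x))`. -/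
noncomputable def klDiv {𝒳 : Type*} [Fintype 𝒳] (R P : 𝒳 → ℝ) : ℝ :=
  ∑ x, R x * Real.log (R x / P x)

/-- χ²-divergence `χ²(R‖P) = ∑ₓ (R(x) − P(x))²/P(x)`. -/
noncomputable def chiSq {𝒳 : Type*} [Fintype 𝒳] (R P : 𝒳 → ℝ) : ℝ :=
  ∑ x, (R x - P x) ^ 2 / P x

open Real Finset

noncomputable def binaryKL (a b : ℝ) : ℝ :=
  a * log (a / b) + (1 - a) * log ((1 - a) / (1 - b))

lemma binaryKL_one_sub (a b : ℝ) : binaryKL (1 - a) (1 - b) = binaryKL a b := by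
  simp only [binaryKL, sub_sub_cancel]; ring

lemma monotoneOn_log_sub_log_one_sub_sub_four_mul :
    MonotoneOn (fun x : ℝ => log x - log (1 - x) - 4 * x) (Set.Ioo 0 1) := by
  have hderiv : ∀ x ∈ Set.Ioo (0 : ℝ) 1,
      HasDerivAt (fun x : ℝ => log x - log (1 - x) - 4 * x) (x⁻¹ + (1 - x)⁻¹ - 4) x := by
    rintro x ⟨hx0, hx1⟩
    have h1x : 1 - x ≠ 0 := by linarith
    exact (((hasDerivAt_log hx0.ne').fun_sub ((hasDerivAt_log h1x).comp x
      ((hasDerivAt_id x).const_sub 1))).fun_sub ((hasDerivAt_id x).const_mul 4)).congr_deriv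
      (by ring)
  refine monotoneOn_of_hasDerivWithinAt_nonneg (f' := fun x => x⁻¹ + (1 - x)⁻¹ - 4)
    (convex_Ioo 0 1) (fun x hx => (hderiv x hx).continuousAt.continuousWithinAt) ?_ ?_ <;>
    rw [interior_Ioo]
  · exact fun x hx => (hderiv x hx).hasDerivWithinAt
  · rintro x ⟨hx0, hx1⟩
    have h1x : 0 < 1 - x := by linarith
    have hsq : x⁻¹ + (1 - x)⁻¹ - 4 = (1 - 2 * x) ^ 2 / (x * (1 - x)) := by
      field_simp; ring
    rw [hsq]; positivity

lemma two_mul_sq_sub_le_binaryKL_of_le {a b : ℝ} (hb : 0 < b) (hba : b ≤ a) (ha : a ≤ 1) :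
    2 * (a - b) ^ 2 ≤ binaryKL a b := by
  set F : ℝ → ℝ := fun x => x * log x - x * log b + (1 - x) * log (1 - x)
    - (1 - x) * log (1 - b) - 2 * (x - b) ^ 2 with hF
  set ψ : ℝ → ℝ := fun x => log x - log (1 - x) - 4 * x
  have hderiv : ∀ x ∈ Set.Ioo b 1, HasDerivAt F (ψ x - ψ b) x := by
    rintro x ⟨hbx, hx1⟩
    have h1x : 1 - x ≠ 0 := by linarith
    have hsub := (hasDerivAt_id x).const_sub 1
    exact (((((hasDerivAt_mul_log (hb.trans hbx).ne').fun_sub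
      ((hasDerivAt_id x).mul_const _)).fun_add ((hasDerivAt_mul_log h1x).comp x hsub)).fun_sub
      (hsub.mul_const _)).fun_sub (((hasDerivAt_id x).sub_const b).fun_pow 2 |>.const_mul 2)
      ).congr_deriv (by simp only [ψ, id, Nat.cast_ofNat]; ring)
  have hmono : MonotoneOn F (Set.Icc b 1) := by
    refine monotoneOn_of_hasDerivWithinAt_nonneg (f' := fun x => ψ x - ψ b) (convex_Icc b 1)
      (by rw [hF]; have := continuous_mul_log; fun_prop) ?_ ?_ <;> rw [interior_Icc]
    · exact fun x hx => (hderiv x hx).hasDerivWithinAt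
    · rintro x ⟨hbx, hx1⟩
      exact sub_nonneg.2 <| monotoneOn_log_sub_log_one_sub_sub_four_mul
        ⟨hb, hbx.trans hx1⟩ ⟨hb.trans hbx, hx1⟩ hbx.le
  have hFa : binaryKL a b = F a + 2 * (a - b) ^ 2 := by
    rcases ha.eq_or_lt with rfl | ha1
    · simp [binaryKL, F]
    · rw [binaryKL, log_div (by linarith) (by linarith), log_div (by linarith) (by linarith)]
      ring
  have hFb : F b ≤ F a := hmono ⟨le_rfl, hba.trans ha⟩ ⟨hba, ha⟩ hba
  simp only [hF, sub_self] at hFb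
  linarith

lemma two_mul_sq_sub_le_binaryKL {a b : ℝ} (ha₀ : 0 ≤ a) (ha₁ : a ≤ 1) (hb₀ : 0 < b)
    (hb₁ : b < 1) : 2 * (a - b) ^ 2 ≤ binaryKL a b := by
  rcases le_total b a with hba | hab
  · exact two_mul_sq_sub_le_binaryKL_of_le hb₀ hba ha₁
  · rw [← binaryKL_one_sub]
    convert two_mul_sq_sub_le_binaryKL_of_le (sub_pos.2 hb₁) (sub_le_sub_left hab 1)
      (sub_le_self 1 ha₀) using 2
    ring

lemma mul_log_add_sub_mul_le_mul_log_div {a b c : ℝ} (ha : 0 ≤ a) (hb : 0 < b) (hc : 0 < c) :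
    a * log c + a - b * c ≤ a * log (a / b) := by
  rcases ha.eq_or_lt with rfl | ha
  · simpa using (mul_pos hb hc).le
  · have := one_sub_inv_le_log_of_pos (x := a / (b * c)) (by positivity)
    rw [log_div ha.ne' (by positivity), log_mul hb.ne' hc.ne', inv_div] at this
    have := mul_le_mul_of_nonneg_left this ha.le
    rw [mul_sub, mul_one, mul_div_cancel₀ _ ha.ne'] at this
    rw [log_div ha.ne' hb.ne']
    linarith

lemma sum_mul_log_div_sum_le {ι : Type*} (s : Finset ι) {a b : ι → ℝ}
    (ha : ∀ i ∈ s, 0 ≤ a i) (hb : ∀ i ∈ s, 0 < b i) :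
    (∑ i ∈ s, a i) * log ((∑ i ∈ s, a i) / ∑ i ∈ s, b i) ≤ ∑ i ∈ s, a i * log (a i / b i) := by
  rcases (sum_nonneg ha).eq_or_lt with hA | hA
  · have ha0 := (sum_eq_zero_iff_of_nonneg ha).1 hA.symm
    rw [← hA, zero_mul, sum_eq_zero fun i hi => by rw [ha0 i hi, zero_mul]]
  · have hB : 0 < ∑ i ∈ s, b i := sum_pos hb (nonempty_of_sum_ne_zero hA.ne')
    calc (∑ i ∈ s, a i) * log ((∑ i ∈ s, a i) / ∑ i ∈ s, b i)
        = ∑ i ∈ s, (a i * log ((∑ i ∈ s, a i) / ∑ i ∈ s, b i) + a i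
            - b i * ((∑ i ∈ s, a i) / ∑ i ∈ s, b i)) := by
          rw [sum_sub_distrib, sum_add_distrib, ← sum_mul, ← sum_mul, mul_div_cancel₀ _ hB.ne']
          ring
      _ ≤ ∑ i ∈ s, a i * log (a i / b i) := sum_le_sum fun i hi =>
          mul_log_add_sub_mul_le_mul_log_div (ha i hi) (hb i hi) (div_pos hA hB)

lemma sum_sq_le_two_mul_sq_sum_filter_nonneg {ι : Type*} [Fintype ι] {f : ι → ℝ}
    (hf : ∑ i, f i = 0) : ∑ i, f i ^ 2 ≤ 2 * (∑ i with 0 ≤ f i, f i) ^ 2 := by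
  have hpos := sum_sq_le_sq_sum_of_nonneg (s := univ.filter fun i => 0 ≤ f i)
    (f := f) fun i hi => (mem_filter.1 hi).2
  have hneg := sum_sq_le_sq_sum_of_nonneg (s := univ.filter fun i => ¬ 0 ≤ f i)
    (f := fun i => -f i) fun i hi => neg_nonneg.2 (le_of_not_ge (mem_filter.1 hi).2)
  have hmass : ∑ i with ¬ 0 ≤ f i, f i = -∑ i with 0 ≤ f i, f i := by
    rw [← sum_filter_add_sum_filter_not univ (fun i => 0 ≤ f i) f] at hf
    linarith
  simp only [neg_sq, sum_neg_distrib, hmass] at hneg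
  rw [← sum_filter_add_sum_filter_not univ (fun i => 0 ≤ f i) (fun i => f i ^ 2)]
  linarith

section Pmf

variable {𝒳 : Type*} [Fintype 𝒳] {R P : 𝒳 → ℝ}

lemma binaryKL_le_klDiv [DecidableEq 𝒳] (hR : IsPmf R) (hP : IsPmf P) (hPpos : ∀ x, 0 < P x)
    (s : Finset 𝒳) : binaryKL (∑ x ∈ s, R x) (∑ x ∈ s, P x) ≤ klDiv R P := by
  have hRc : ∑ x ∈ sᶜ, R x = 1 - ∑ x ∈ s, R x := by rw [← hR.2, ← sum_add_sum_compl s]; ring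
  have hPc : ∑ x ∈ sᶜ, P x = 1 - ∑ x ∈ s, P x := by rw [← hP.2, ← sum_add_sum_compl s]; ring
  have hs := sum_mul_log_div_sum_le s (fun x _ => hR.1 x) (fun x _ => hPpos x)
  have hsc := sum_mul_log_div_sum_le sᶜ (fun x _ => hR.1 x) (fun x _ => hPpos x)
  rw [hRc, hPc] at hsc
  rw [binaryKL, klDiv, ← sum_add_sum_compl s]
  exact add_le_add hs hsc

theorem two_mul_sq_sub_le_klDiv (hR : IsPmf R) (hP : IsPmf P) (hPpos : ∀ x, 0 < P x)
    (s : Finset 𝒳) : 2 * (∑ x ∈ s, R x - ∑ x ∈ s, P x) ^ 2 ≤ klDiv R P := by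
  classical
  have hkl := binaryKL_le_klDiv hR hP hPpos s
  rcases s.eq_empty_or_nonempty with rfl | hs
  · simpa [binaryKL] using hkl
  rcases sᶜ.eq_empty_or_nonempty with hsc | hsc
  · rw [compl_eq_empty_iff] at hsc
    subst hsc
    simpa [binaryKL, hR.2, hP.2] using hkl
  refine le_trans (two_mul_sq_sub_le_binaryKL (sum_nonneg fun x _ => hR.1 x) ?_
    (sum_pos (fun x _ => hPpos x) hs) ?_) hkl
  · rw [← hR.2]; exact sum_le_univ_sum_of_nonneg hR.1
  · rw [← hP.2, ← sum_add_sum_compl s, lt_add_iff_pos_right]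
    exact sum_pos (fun x _ => hPpos x) hsc

lemma inf'_mul_chiSq_le_sum_sq_sub [Nonempty 𝒳] (R : 𝒳 → ℝ) (hPpos : ∀ x, 0 < P x) :
    univ.inf' univ_nonempty P * chiSq R P ≤ ∑ x, (R x - P x) ^ 2 := by
  rw [chiSq, mul_sum]
  refine sum_le_sum fun x _ => ?_
  calc univ.inf' univ_nonempty P * ((R x - P x) ^ 2 / P x)
      ≤ P x * ((R x - P x) ^ 2 / P x) :=
        mul_le_mul_of_nonneg_right (inf'_le P (mem_univ x)) (div_nonneg (sq_nonneg _) (hPpos x).le)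
    _ = (R x - P x) ^ 2 := mul_div_cancel₀ _ (hPpos x).ne'

end Pmf

theorem kl_ge_min_mul_chiSq_general
    {𝒳 : Type*} [Fintype 𝒳] [Nonempty 𝒳]
    (R P : 𝒳 → ℝ) (hR : IsPmf R) (hP : IsPmf P) (hPpos : ∀ x, 0 < P x) :
    (Finset.univ.inf' Finset.univ_nonempty P) * chiSq R P ≤ klDiv R P :=
  calc univ.inf' univ_nonempty P * chiSq R P
      ≤ ∑ x, (R x - P x) ^ 2 := inf'_mul_chiSq_le_sum_sq_sub R hPpos
    _ ≤ 2 * (∑ x with 0 ≤ R x - P x, (R x - P x)) ^ 2 :=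
        sum_sq_le_two_mul_sq_sum_filter_nonneg (by rw [sum_sub_distrib, hR.2, hP.2, sub_self])
    _ = 2 * (∑ x with 0 ≤ R x - P x, R x - ∑ x with 0 ≤ R x - P x, P x) ^ 2 := by
        rw [sum_sub_distrib]
    _ ≤ klDiv R P := two_mul_sq_sub_le_klDiv hR hP hPpos _

/-- `D(R‖P) ≥ (minₓ P(x)) ⬝ χ²(R‖P)`. -/
theorem kl_ge_min_mul_chiSq
    {𝒳 : Type*} [Fintype 𝒳] [Nonempty 𝒳] (hcard : 2 ≤ Fintype.card 𝒳)
    (R P : 𝒳 → ℝ) (hR : IsPmf R) (hP : IsPmf P) (hPpos : ∀ x, 0 < P x) :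
    (Finset.univ.inf' Finset.univ_nonempty P) * chiSq R P ≤ klDiv R P :=
  kl_ge_min_mul_chiSq_general R P hR hP hPpos
end

section
/- For every pmf R on 𝒳 and every pmf P on 𝒳 with P(x)>0 for all x, D(R||P) ≥ ( φ( max_{A⊆𝒳} min{P(A), 1−P(A)} ) · min_{x∈𝒳} P(x) / 2 ) · χ²(R||P), where P(A)=Σ_{x∈A}P(x). -/
/-- The function `φ(p) = (1/(1−2p)) log((1−p)/p)` for `p ∈ [0,1/2)`, with `φ(1/2) = 2`. -/
noncomputable def phiFun (p : ℝ) : ℝ :=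
  if p = 1 / 2 then 2 else (1 / (1 - 2 * p)) * Real.log ((1 - p) / p)

/-- `max_{A ⊆ 𝒳} min{P(A), 1 − P(A)}` where `P(A) = ∑_{x∈A} P(x)`. -/
noncomputable def balSep {𝒳 : Type*} [Fintype 𝒳] (P : 𝒳 → ℝ) : ℝ :=
  (Finset.univ : Finset 𝒳).powerset.sup' (Finset.powerset_nonempty _)
    (fun A => min (∑ x ∈ A, P x) (1 - ∑ x ∈ A, P x))

/-!
Let `A = {x | P x ≤ R x}`, `a = R(A)` and `p = P(A)`. Merging `A` and its complement into two
atoms can only decrease the divergence, so `D(R‖P) ≥ d(a‖p)` (log-sum inequality). Every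
`|R x - P x|` is at most `a - p` and `∑ₓ |R x - P x| = 2 (a - p)`, so
`minₓ P(x) · χ²(R‖P) ≤ 2 (a - p)²`. It remains to combine the Ordentlich–Weinberger inequality
`d(a‖p) ≥ φ(min(p, 1 - p)) (a - p)²` with `min(p, 1 - p) ≤ balSep P` and the monotonicity of `φ`.
All properties of `φ` come from writing `φ(p)` as half the slope of the chord of the function
`logit`, which is concave on `(0, 1/2]`, over `[p, 1/2]`.

For `p ≤ 1/2` put `g(a) = d(a‖p) - φ(p) (a - p)²`. Its second derivative `1/(a(1 - a)) - 2 φ(p)`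
is nonnegative near `0` and `1` and nonpositive in between, so `g` is convex–concave–convex. `g`
has a stationary zero at `p` and, by the very definition of `φ`, another one at `1 - p`; these lie
in the two convex pieces, which forces `g ≥ 0`.
-/

open Real Set

noncomputable def logit (x : ℝ) : ℝ := log x - log (1 - x)

lemma hasDerivAt_logit {x : ℝ} (hx₀ : 0 < x) (hx₁ : x < 1) :
    HasDerivAt logit (x⁻¹ + (1 - x)⁻¹) x :=
  (((hasDerivAt_id' x).log hx₀.ne').fun_sub
    (((hasDerivAt_id' x).const_sub 1).log (by linarith))).congr_deriv (by ring)

lemma logit_one_sub (x : ℝ) : logit (1 - x) = -logit x := by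
  simp [logit]

lemma logit_half : logit (1 / 2) = 0 := by
  norm_num [logit]

lemma concaveOn_logit : ConcaveOn ℝ (Ioc 0 (1 / 2)) logit := by
  refine concaveOn_of_hasDerivWithinAt2_nonpos (convex_Ioc 0 _)
    (f' := fun x => x⁻¹ + (1 - x)⁻¹) (f'' := fun x => -(x ^ 2)⁻¹ + ((1 - x) ^ 2)⁻¹)
    (fun x hx => (hasDerivAt_logit hx.1 (by linarith [hx.2])).continuousAt.continuousWithinAt)
    (fun x hx => ?_) (fun x hx => ?_) (fun x hx => ?_)
  all_goals
    rw [interior_Ioc] at hx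
    have hx₀ : 0 < x := hx.1
    have hx₁ : x < 1 := by linarith [hx.2]
  · exact (hasDerivAt_logit hx₀ hx₁).hasDerivWithinAt
  · exact (((hasDerivAt_id' x).fun_inv hx₀.ne').fun_add (((hasDerivAt_id' x).const_sub 1).fun_inv
      (by linarith))).congr_deriv (by ring) |>.hasDerivWithinAt
  · have := inv_anti₀ (by positivity) (by nlinarith [hx.2] : x ^ 2 ≤ (1 - x) ^ 2)
    linarith

lemma phiFun_eq_slope_logit {p : ℝ} (hp₀ : 0 < p) (hp : p < 1 / 2) :
    phiFun p = slope logit p (1 / 2) / 2 := by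
  have h : 1 - 2 * p ≠ 0 := by linarith
  rw [phiFun, if_neg hp.ne, slope_def_field, logit_half, logit, log_div (by linarith) hp₀.ne']
  field_simp
  ring

lemma slope_logit_half_le {p : ℝ} (hp₀ : 0 < p) (hp : p < 1 / 2) :
    slope logit p (1 / 2) ≤ p⁻¹ + (1 - p)⁻¹ :=
  concaveOn_logit.slope_le_of_hasDerivAt ⟨hp₀, hp.le⟩ ⟨by norm_num, le_rfl⟩ hp
    (hasDerivAt_logit hp₀ (by linarith))

lemma four_le_slope_logit_half {p : ℝ} (hp₀ : 0 < p) (hp : p < 1 / 2) :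
    4 ≤ slope logit p (1 / 2) := by
  have h := concaveOn_logit.le_slope_of_hasDerivAt ⟨hp₀, hp.le⟩ ⟨by norm_num, le_rfl⟩ hp
    (hasDerivAt_logit (by norm_num : (0 : ℝ) < 1 / 2) (by norm_num))
  norm_num at h
  linarith

lemma two_le_phiFun {p : ℝ} (hp₀ : 0 < p) (hp : p ≤ 1 / 2) : 2 ≤ phiFun p := by
  rcases hp.lt_or_eq with hp | rfl
  · rw [phiFun_eq_slope_logit hp₀ hp]
    linarith [four_le_slope_logit_half hp₀ hp]
  · simp [phiFun]

lemma phiFun_antitoneOn : AntitoneOn phiFun (Ioc 0 (1 / 2)) := by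
  intro q hq r hr hqr
  rcases hr.2.lt_or_eq with hr' | rfl
  · rw [phiFun_eq_slope_logit hq.1 (hqr.trans_lt hr'), phiFun_eq_slope_logit hr.1 hr']
    have h := concaveOn_logit.neg.secant_mono (a := 1 / 2) ⟨by norm_num, le_rfl⟩ hq hr
      (hqr.trans_lt hr').ne hr'.ne hqr
    have e : ∀ x, slope (-logit) (1 / 2) x = -slope logit x (1 / 2) := fun x => by
      rw [slope_comm]
      exact slope_neg logit x (1 / 2)
    rw [← slope_def_field, ← slope_def_field, e, e] at h
    linarith
  · rw [phiFun, if_pos rfl]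
    exact two_le_phiFun hq.1 hq.2

lemma two_mul_phiFun_mul_le_one {p : ℝ} (hp₀ : 0 < p) (hp : p ≤ 1 / 2) :
    2 * phiFun p * (p * (1 - p)) ≤ 1 := by
  rcases hp.lt_or_eq with hp | rfl
  · have hpq : 0 < p * (1 - p) := mul_pos hp₀ (by linarith)
    have h : slope logit p (1 / 2) ≤ 1 / (p * (1 - p)) := by
      convert slope_logit_half_le hp₀ hp using 1
      have : 1 - p ≠ 0 := by linarith
      field_simp
      ring
    rw [phiFun_eq_slope_logit hp₀ hp, mul_div_cancel₀ _ two_ne_zero]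
    exact (le_div_iff₀ hpq).1 h
  · norm_num [phiFun]

lemma logit_eq_neg_phiFun_mul {p : ℝ} (hp₀ : 0 < p) (hp : p ≤ 1 / 2) :
    logit p = -(phiFun p * (1 - 2 * p)) := by
  rcases hp.lt_or_eq with hp | rfl
  · have h : 1 - 2 * p ≠ 0 := by linarith
    rw [phiFun_eq_slope_logit hp₀ hp, slope_def_field, logit_half]
    field_simp
    ring
  · norm_num [logit]

lemma ConvexOn.le_of_hasDerivAt_eq_zero {S : Set ℝ} {f : ℝ → ℝ} {x y : ℝ}
    (hf : ConvexOn ℝ S f) (hx : x ∈ S) (hy : y ∈ S) (hd : HasDerivAt f 0 x) : f x ≤ f y := by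
  rcases lt_trichotomy x y with hxy | rfl | hyx
  · have h := hf.le_slope_of_hasDerivAt hx hy hxy hd
    rw [slope_def_field, le_div_iff₀ (sub_pos.2 hxy)] at h
    linarith
  · exact le_rfl
  · have h := hf.slope_le_of_hasDerivAt hy hx hyx hd
    rw [slope_def_field, div_le_iff₀ (sub_pos.2 hyx)] at h
    linarith

lemma nonneg_of_convexOn_concaveOn_convexOn {g : ℝ → ℝ} {l s t u p q x : ℝ} (hst : s ≤ t)
    (h₁ : ConvexOn ℝ (Icc l s) g) (h₂ : ConcaveOn ℝ (Icc s t) g) (h₃ : ConvexOn ℝ (Icc t u) g)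
    (hp : p ∈ Icc l s) (hq : q ∈ Icc t u) (hgp : g p = 0) (hgq : g q = 0)
    (hdp : HasDerivAt g 0 p) (hdq : HasDerivAt g 0 q) (hx : x ∈ Icc l u) : 0 ≤ g x := by
  have left : ∀ y ∈ Icc l s, 0 ≤ g y := fun y hy => hgp ▸ h₁.le_of_hasDerivAt_eq_zero hp hy hdp
  have right : ∀ y ∈ Icc t u, 0 ≤ g y := fun y hy => hgq ▸ h₃.le_of_hasDerivAt_eq_zero hq hy hdq
  have hls : l ≤ s := hp.1.trans hp.2
  have htu : t ≤ u := hq.1.trans hq.2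
  rcases le_total x s with hxs | hsx
  · exact left x ⟨hx.1, hxs⟩
  rcases le_total x t with hxt | htx
  · exact (le_min (left s ⟨hls, le_rfl⟩) (right t ⟨le_rfl, htu⟩)).trans
      (h₂.min_le_of_mem_Icc (left_mem_Icc.2 hst) (right_mem_Icc.2 hst) ⟨hsx, hxt⟩)
  · exact right x ⟨htx, hx.2⟩

noncomputable def binKLDiv (a p : ℝ) : ℝ :=
  a * log (a / p) + (1 - a) * log ((1 - a) / (1 - p))

lemma binKLDiv_one_sub_one_sub (a p : ℝ) : binKLDiv (1 - a) (1 - p) = binKLDiv a p := by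
  simp only [binKLDiv, sub_sub_cancel]
  ring

lemma binKLDiv_self (p : ℝ) : binKLDiv p p = 0 := by
  simp [binKLDiv]

lemma binKLDiv_one_sub_self {p : ℝ} (hp₀ : 0 < p) (hp₁ : p < 1) :
    binKLDiv (1 - p) p = -((1 - 2 * p) * logit p) := by
  rw [binKLDiv, sub_sub_cancel, log_div (by linarith) hp₀.ne', log_div hp₀.ne' (by linarith),
    logit]
  ring

lemma binKLDiv_eq_neg_binEntropy_sub {p : ℝ} (hp₀ : p ≠ 0) (hp₁ : 1 - p ≠ 0) (a : ℝ) :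
    binKLDiv a p = -binEntropy a - a * log p - (1 - a) * log (1 - p) := by
  have key : ∀ x y : ℝ, y ≠ 0 → x * log (x / y) = -(x * log x⁻¹) - x * log y := by
    intro x y hy
    rcases eq_or_ne x 0 with rfl | hx
    · simp
    · rw [log_div hx hy, log_inv]
      ring
  rw [binKLDiv, key a p hp₀, key (1 - a) (1 - p) hp₁, binEntropy]
  ring

noncomputable def pinskerGap (c p a : ℝ) : ℝ := binKLDiv a p - c * (a - p) ^ 2

section pinskerGap

variable {c p : ℝ}

lemma pinskerGap_eq (hp₀ : 0 < p) (hp₁ : p < 1) : pinskerGap c p =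
    fun a => -binEntropy a - a * log p - (1 - a) * log (1 - p) - c * (a - p) ^ 2 := by
  funext a
  rw [pinskerGap, binKLDiv_eq_neg_binEntropy_sub hp₀.ne' (by linarith)]

lemma continuous_pinskerGap (hp₀ : 0 < p) (hp₁ : p < 1) : Continuous (pinskerGap c p) := by
  rw [pinskerGap_eq hp₀ hp₁]
  fun_prop

lemma hasDerivAt_pinskerGap (hp₀ : 0 < p) (hp₁ : p < 1) {a : ℝ} (ha₀ : 0 < a) (ha₁ : a < 1) :
    HasDerivAt (pinskerGap c p) (logit a - logit p - 2 * c * (a - p)) a := by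
  rw [pinskerGap_eq hp₀ hp₁]
  refine ((((hasDerivAt_binEntropy ha₀.ne' (by linarith)).fun_neg.fun_sub
    ((hasDerivAt_id' a).mul_const (log p))).fun_sub
    (((hasDerivAt_id' a).const_sub 1).mul_const (log (1 - p)))).fun_sub
    ((((hasDerivAt_id' a).sub_const p).fun_pow 2).const_mul c)).congr_deriv ?_
  simp only [logit]
  ring

lemma hasDerivAt_pinskerGap_deriv {a : ℝ} (ha₀ : 0 < a) (ha₁ : a < 1) :
    HasDerivAt (fun x => logit x - logit p - 2 * c * (x - p)) ((a * (1 - a))⁻¹ - 2 * c) a := by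
  have : 1 - a ≠ 0 := by linarith
  refine (((hasDerivAt_logit ha₀ ha₁).sub_const _).fun_sub
    (((hasDerivAt_id' a).sub_const p).const_mul (2 * c))).congr_deriv ?_
  field_simp
  ring

lemma convexOn_pinskerGap (hp₀ : 0 < p) (hp₁ : p < 1) {l r : ℝ} (hl : 0 ≤ l) (hr : r ≤ 1)
    (h : ∀ x ∈ Ioo l r, 2 * c * (x * (1 - x)) ≤ 1) : ConvexOn ℝ (Icc l r) (pinskerGap c p) := by
  refine convexOn_of_hasDerivWithinAt2_nonneg (convex_Icc l r)
    (continuous_pinskerGap hp₀ hp₁).continuousOn (fun x hx => ?_) (fun x hx => ?_)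
    (fun x hx => ?_) (f' := fun x => logit x - logit p - 2 * c * (x - p))
    (f'' := fun x => (x * (1 - x))⁻¹ - 2 * c)
  all_goals
    simp only [interior_Icc] at hx ⊢
    have hx₀ : 0 < x := by linarith [hx.1]
    have hx₁ : x < 1 := by linarith [hx.2]
  · exact (hasDerivAt_pinskerGap hp₀ hp₁ hx₀ hx₁).hasDerivWithinAt
  · exact (hasDerivAt_pinskerGap_deriv hx₀ hx₁).hasDerivWithinAt
  · rw [sub_nonneg, ← one_div, le_div_iff₀ (by nlinarith)]
    exact h x hx

lemma concaveOn_pinskerGap (hp₀ : 0 < p) (hp₁ : p < 1) {l r : ℝ} (hl : 0 ≤ l) (hr : r ≤ 1)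
    (h : ∀ x ∈ Ioo l r, 1 ≤ 2 * c * (x * (1 - x))) : ConcaveOn ℝ (Icc l r) (pinskerGap c p) := by
  refine concaveOn_of_hasDerivWithinAt2_nonpos (convex_Icc l r)
    (continuous_pinskerGap hp₀ hp₁).continuousOn (fun x hx => ?_) (fun x hx => ?_)
    (fun x hx => ?_) (f' := fun x => logit x - logit p - 2 * c * (x - p))
    (f'' := fun x => (x * (1 - x))⁻¹ - 2 * c)
  all_goals
    simp only [interior_Icc] at hx ⊢
    have hx₀ : 0 < x := by linarith [hx.1]
    have hx₁ : x < 1 := by linarith [hx.2]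
  · exact (hasDerivAt_pinskerGap hp₀ hp₁ hx₀ hx₁).hasDerivWithinAt
  · exact (hasDerivAt_pinskerGap_deriv hx₀ hx₁).hasDerivWithinAt
  · rw [sub_nonpos, ← one_div, div_le_iff₀ (by nlinarith)]
    exact h x hx

lemma pinskerGap_self (c p : ℝ) : pinskerGap c p p = 0 := by
  simp [pinskerGap, binKLDiv_self]

lemma hasDerivAt_pinskerGap_self (hp₀ : 0 < p) (hp₁ : p < 1) :
    HasDerivAt (pinskerGap c p) 0 p :=
  (hasDerivAt_pinskerGap hp₀ hp₁ hp₀ hp₁).congr_deriv (by ring)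

lemma pinskerGap_phiFun_one_sub (hp₀ : 0 < p) (hp : p ≤ 1 / 2) :
    pinskerGap (phiFun p) p (1 - p) = 0 := by
  rw [pinskerGap, binKLDiv_one_sub_self hp₀ (by linarith), logit_eq_neg_phiFun_mul hp₀ hp]
  ring

lemma hasDerivAt_pinskerGap_phiFun_one_sub (hp₀ : 0 < p) (hp : p ≤ 1 / 2) :
    HasDerivAt (pinskerGap (phiFun p) p) 0 (1 - p) :=
  (hasDerivAt_pinskerGap hp₀ (by linarith) (by linarith) (by linarith)).congr_deriv
    (by rw [logit_one_sub, logit_eq_neg_phiFun_mul hp₀ hp]; ring)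

end pinskerGap

lemma exists_two_mul_mul_one_sub_eq_one {c : ℝ} (hc : 2 ≤ c) :
    ∃ t, 0 < t ∧ t ≤ 1 / 2 ∧ 2 * c * (t * (1 - t)) = 1 := by
  have hc₀ : 0 < c := by linarith
  set s := √(1 - 2 / c)
  have hs : s ^ 2 = 1 - 2 / c := sq_sqrt (by rw [sub_nonneg, div_le_one hc₀]; exact hc)
  have hs₁ : s < 1 := by nlinarith [div_pos two_pos hc₀, sqrt_nonneg (1 - 2 / c)]
  refine ⟨(1 - s) / 2, by linarith, by linarith [sqrt_nonneg (1 - 2 / c)], ?_⟩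
  have : c * s ^ 2 = c - 2 := by rw [hs]; field_simp
  linear_combination -this / 2

theorem phiFun_mul_sq_le_binKLDiv {p a : ℝ} (hp₀ : 0 < p) (hp : p ≤ 1 / 2) (ha₀ : 0 ≤ a)
    (ha₁ : a ≤ 1) : phiFun p * (a - p) ^ 2 ≤ binKLDiv a p := by
  have hp₁ : p < 1 := by linarith
  have hc := two_le_phiFun hp₀ hp
  -- the convex and concave pieces are separated by the roots `t ≤ 1 - t` of `2 φ(p) t (1 - t) = 1`
  obtain ⟨t, ht₀, ht, hct⟩ := exists_two_mul_mul_one_sub_eq_one hc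
  have hsign : ∀ y, 2 * phiFun p * (y * (1 - y)) =
      1 - 2 * phiFun p * ((t - y) * (1 - t - y)) := fun y => by
    linear_combination hct
  have hc₀ : 0 < 2 * phiFun p := by linarith
  have hpt : p ≤ t := by
    by_contra! htp
    have := two_mul_phiFun_mul_le_one hp₀ hp
    rw [hsign, sub_le_self_iff] at this
    exact this.not_gt (mul_neg_of_pos_of_neg hc₀ (mul_neg_of_neg_of_pos (by linarith) (by linarith)))
  have convex_left := convexOn_pinskerGap (c := phiFun p) (r := t) hp₀ hp₁ le_rfl (by linarith)
    fun y hy => by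
      rw [hsign, sub_le_self_iff]
      exact mul_nonneg hc₀.le (mul_nonneg (by linarith [hy.2]) (by linarith [hy.2]))
  have concave_middle := concaveOn_pinskerGap (c := phiFun p) (r := 1 - t) hp₀ hp₁ ht₀.le
    (by linarith) fun y hy => by
      rw [hsign, le_sub_self_iff]
      exact mul_nonpos_of_nonneg_of_nonpos hc₀.le
        (mul_nonpos_of_nonpos_of_nonneg (by linarith [hy.1]) (by linarith [hy.2]))
  have convex_right := convexOn_pinskerGap (c := phiFun p) (l := 1 - t) hp₀ hp₁ (by linarith) le_rfl
    fun y hy => by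
      rw [hsign, sub_le_self_iff]
      exact mul_nonneg hc₀.le
        (mul_nonneg_of_nonpos_of_nonpos (by linarith [hy.1]) (by linarith [hy.1]))
  have := nonneg_of_convexOn_concaveOn_convexOn (by linarith) convex_left concave_middle
    convex_right ⟨hp₀.le, hpt⟩ ⟨by linarith, by linarith⟩ (pinskerGap_self _ p)
    (pinskerGap_phiFun_one_sub hp₀ hp) (hasDerivAt_pinskerGap_self hp₀ hp₁)
    (hasDerivAt_pinskerGap_phiFun_one_sub hp₀ hp) ⟨ha₀, ha₁⟩
  rw [pinskerGap] at this
  linarith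

theorem phiFun_min_mul_sq_le_binKLDiv {p a : ℝ} (hp₀ : 0 < p) (hp₁ : p < 1) (ha₀ : 0 ≤ a)
    (ha₁ : a ≤ 1) : phiFun (min p (1 - p)) * (a - p) ^ 2 ≤ binKLDiv a p := by
  rcases le_total p (1 / 2) with hp | hp
  · rw [min_eq_left (by linarith)]
    exact phiFun_mul_sq_le_binKLDiv hp₀ hp ha₀ ha₁
  · rw [min_eq_right (by linarith), ← binKLDiv_one_sub_one_sub,
      show (a - p) ^ 2 = (1 - a - (1 - p)) ^ 2 by ring]
    exact phiFun_mul_sq_le_binKLDiv (by linarith) (by linarith) (by linarith) (by linarith)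

lemma mul_log_add_sub_le_mul_log_div {a b k : ℝ} (ha : 0 ≤ a) (hb : 0 < b) (hk : 0 < k) :
    a * log k + a - k * b ≤ a * log (a / b) := by
  rcases ha.eq_or_lt with rfl | ha
  · simp only [zero_mul, add_zero, zero_sub, zero_div, log_zero, neg_nonpos]
    positivity
  have h := mul_le_mul_of_nonneg_left (log_le_sub_one_of_pos (by positivity : 0 < k * b / a)) ha.le
  rw [log_div (by positivity) ha.ne', log_mul hk.ne' hb.ne'] at h
  rw [log_div ha.ne' hb.ne']
  have : a * (k * b / a - 1) = k * b - a := by field_simp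
  linarith

theorem log_sum_inequality {ι : Type*} (s : Finset ι) {r q : ι → ℝ} (hr : ∀ i ∈ s, 0 ≤ r i)
    (hq : ∀ i ∈ s, 0 < q i) :
    (∑ i ∈ s, r i) * log ((∑ i ∈ s, r i) / ∑ i ∈ s, q i) ≤ ∑ i ∈ s, r i * log (r i / q i) := by
  rcases s.eq_empty_or_nonempty with rfl | hs
  · simp
  have hQ : 0 < ∑ i ∈ s, q i := Finset.sum_pos hq hs
  rcases (Finset.sum_nonneg hr).eq_or_lt with hR | hR
  · rw [← hR, zero_mul]
    rw [eq_comm, Finset.sum_eq_zero_iff_of_nonneg hr] at hR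
    exact (Finset.sum_eq_zero fun i hi => by rw [hR i hi, zero_mul]).ge
  set k := (∑ i ∈ s, r i) / ∑ i ∈ s, q i
  calc (∑ i ∈ s, r i) * log k = ∑ i ∈ s, (r i * log k + r i - k * q i) := by
        rw [Finset.sum_sub_distrib, Finset.sum_add_distrib, ← Finset.sum_mul, ← Finset.mul_sum,
          div_mul_cancel₀ _ hQ.ne']
        ring
    _ ≤ ∑ i ∈ s, r i * log (r i / q i) := Finset.sum_le_sum fun i hi =>
        mul_log_add_sub_le_mul_log_div (hr i hi) (hq i hi) (div_pos hR hQ)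

section PosPart

variable {ι : Type*} [Fintype ι] {f : ι → ℝ}

lemma sum_negPart_eq_sum_posPart (hf : ∑ i, f i = 0) : ∑ i, (f i)⁻ = ∑ i, (f i)⁺ := by
  have h : ∑ i, ((f i)⁺ - (f i)⁻) = 0 := by simpa only [posPart_sub_negPart] using hf
  rw [Finset.sum_sub_distrib, sub_eq_zero] at h
  exact h.symm

lemma abs_le_sum_posPart (hf : ∑ i, f i = 0) (i : ι) : |f i| ≤ ∑ j, (f j)⁺ := by
  rcases le_or_gt 0 (f i) with h | h
  · rw [abs_of_nonneg h, ← posPart_eq_self.2 h]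
    exact Finset.single_le_sum (fun j _ => posPart_nonneg (f j)) (Finset.mem_univ i)
  · rw [abs_of_neg h, ← negPart_eq_neg.2 h.le, ← sum_negPart_eq_sum_posPart hf]
    exact Finset.single_le_sum (fun j _ => negPart_nonneg (f j)) (Finset.mem_univ i)

lemma sum_abs_eq_two_mul_sum_posPart (hf : ∑ i, f i = 0) :
    ∑ i, |f i| = 2 * ∑ i, (f i)⁺ := by
  simp only [← posPart_add_negPart, Finset.sum_add_distrib, sum_negPart_eq_sum_posPart hf]
  ring

lemma exists_lt_of_sum_eq_of_ne {g : ι → ℝ} (h : ∑ i, f i = ∑ i, g i) (hfg : f ≠ g) :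
    ∃ i, f i < g i := by
  by_contra! hgf
  exact hfg (funext fun i =>
    ((Finset.sum_eq_sum_iff_of_le fun i _ => hgf i).1 h.symm i (Finset.mem_univ i)).symm)

end PosPart

section Pmf

variable {𝒳 : Type*} [Fintype 𝒳]

lemma IsPmf.sum_le_one {R : 𝒳 → ℝ} (hR : IsPmf R) (s : Finset 𝒳) : ∑ x ∈ s, R x ≤ 1 :=
  hR.2 ▸ Finset.sum_le_univ_sum_of_nonneg hR.1

lemma one_sub_sum_eq_sum_compl [DecidableEq 𝒳] {R : 𝒳 → ℝ} (hR : ∑ x, R x = 1)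
    (s : Finset 𝒳) : 1 - ∑ x ∈ s, R x = ∑ x ∈ sᶜ, R x := by
  rw [← hR, ← Finset.sum_add_sum_compl s R, add_sub_cancel_left]

theorem binKLDiv_le_klDiv {R P : 𝒳 → ℝ} (hR : IsPmf R) (hP : ∑ x, P x = 1)
    (hPpos : ∀ x, 0 < P x) (s : Finset 𝒳) :
    binKLDiv (∑ x ∈ s, R x) (∑ x ∈ s, P x) ≤ klDiv R P := by
  classical
  rw [binKLDiv, one_sub_sum_eq_sum_compl hR.2, one_sub_sum_eq_sum_compl hP, klDiv,
    ← Finset.sum_add_sum_compl s]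
  exact add_le_add (log_sum_inequality s (fun x _ => hR.1 x) fun x _ => hPpos x)
    (log_sum_inequality sᶜ (fun x _ => hR.1 x) fun x _ => hPpos x)

theorem mul_chiSq_le {R P : 𝒳 → ℝ} (hRP : ∑ x, R x = ∑ x, P x) {m : ℝ} (hm : 0 < m)
    (hmP : ∀ x, m ≤ P x) : m * chiSq R P ≤ 2 * (∑ x, (R x - P x)⁺) ^ 2 := by
  have hf : ∑ x, (R x - P x) = 0 := by rw [Finset.sum_sub_distrib, hRP, sub_self]
  set δ := ∑ x, (R x - P x)⁺
  calc m * chiSq R P = ∑ x, m / P x * (|R x - P x| * |R x - P x|) := by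
        rw [chiSq, Finset.mul_sum]
        refine Finset.sum_congr rfl fun x _ => ?_
        rw [abs_mul_abs_self]
        ring
    _ ≤ ∑ x, 1 * (|R x - P x| * δ) := by
        gcongr with x
        · exact div_le_one_of_le₀ (hmP x) (hm.le.trans (hmP x))
        · exact abs_le_sum_posPart hf x
    _ = 2 * δ ^ 2 := by
        simp only [one_mul]
        rw [← Finset.sum_mul, sum_abs_eq_two_mul_sum_posPart hf]
        ring

lemma sum_filter_le_sub_sum_filter_le (R P : 𝒳 → ℝ) :
    ∑ x with P x ≤ R x, R x - ∑ x with P x ≤ R x, P x = ∑ x, (R x - P x)⁺ := by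
  rw [← Finset.sum_sub_distrib, Finset.sum_filter]
  refine Finset.sum_congr rfl fun x _ => ?_
  split_ifs with h
  · exact (posPart_eq_self.2 (sub_nonneg.2 h)).symm
  · exact (posPart_eq_zero.2 (sub_nonpos.2 (not_le.1 h).le)).symm

lemma sum_filter_le_mem_Ioo {R P : 𝒳 → ℝ} (hR : ∑ x, R x = 1) (hP : ∑ x, P x = 1)
    (hPpos : ∀ x, 0 < P x) (hRP : R ≠ P) : ∑ x with P x ≤ R x, P x ∈ Ioo 0 1 := by
  obtain ⟨x, hx⟩ := exists_lt_of_sum_eq_of_ne (hP.trans hR.symm) hRP.symm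
  obtain ⟨y, hy⟩ := exists_lt_of_sum_eq_of_ne (hR.trans hP.symm) hRP
  constructor
  · exact (hPpos x).trans_le (Finset.single_le_sum (fun z _ => (hPpos z).le)
      (Finset.mem_filter.2 ⟨Finset.mem_univ x, hx.le⟩))
  · exact hP ▸ Finset.sum_lt_sum_of_subset (Finset.filter_subset _ _) (Finset.mem_univ y)
      (fun h => (Finset.mem_filter.1 h).2.not_gt hy) (hPpos y) fun z _ _ => (hPpos z).le

lemma balSep_le_half (P : 𝒳 → ℝ) : balSep P ≤ 1 / 2 :=
  Finset.sup'_le _ _ fun A _ => by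
    rcases le_total (∑ x ∈ A, P x) (1 / 2) with h | h
    exacts [(min_le_left _ _).trans h, (min_le_right _ _).trans (by linarith)]

lemma min_le_balSep (P : 𝒳 → ℝ) (A : Finset 𝒳) :
    min (∑ x ∈ A, P x) (1 - ∑ x ∈ A, P x) ≤ balSep P :=
  Finset.le_sup' (fun A => min (∑ x ∈ A, P x) (1 - ∑ x ∈ A, P x))
    (Finset.mem_powerset.2 (Finset.subset_univ A))

end Pmf

theorem kl_ge_phi_min_mul_chiSq_general
    {𝒳 : Type*} [Fintype 𝒳] [Nonempty 𝒳]
    (R P : 𝒳 → ℝ) (hR : IsPmf R) (hP : IsPmf P) (hPpos : ∀ x, 0 < P x) :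
    phiFun (balSep P) * Finset.univ.inf' Finset.univ_nonempty P / 2 * chiSq R P
      ≤ klDiv R P := by
  obtain rfl | hRP := eq_or_ne R P
  · simp [chiSq, klDiv, div_self (hPpos _).ne']
  set m := Finset.univ.inf' Finset.univ_nonempty P
  have hm : 0 < m := (Finset.lt_inf'_iff _).2 fun x _ => hPpos x
  obtain ⟨hp₀, hp₁⟩ := sum_filter_le_mem_Ioo hR.2 hP.2 hPpos hRP
  have hδ := sum_filter_le_sub_sum_filter_le R P
  set A := Finset.univ.filter fun x => P x ≤ R x
  set a := ∑ x ∈ A, R x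
  set p := ∑ x ∈ A, P x
  have hq₀ : 0 < min p (1 - p) := lt_min hp₀ (by linarith)
  have hbal := min_le_balSep P A
  calc phiFun (balSep P) * m / 2 * chiSq R P = phiFun (balSep P) * (m * chiSq R P) / 2 := by
        ring
    _ ≤ phiFun (balSep P) * (2 * (a - p) ^ 2) / 2 := by
        have := two_le_phiFun (hq₀.trans_le hbal) (balSep_le_half P)
        rw [hδ]
        gcongr phiFun (balSep P) * ?_ / 2
        exact mul_chiSq_le (hR.2.trans hP.2.symm) hm fun x => Finset.inf'_le _ (Finset.mem_univ x)
    _ ≤ phiFun (min p (1 - p)) * (a - p) ^ 2 := by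
        rw [mul_div_assoc, mul_div_cancel_left₀ _ two_ne_zero]
        gcongr
        exact phiFun_antitoneOn ⟨hq₀, hbal.trans (balSep_le_half P)⟩
          ⟨hq₀.trans_le hbal, balSep_le_half P⟩ hbal
    _ ≤ binKLDiv a p := phiFun_min_mul_sq_le_binKLDiv hp₀ hp₁
        (Finset.sum_nonneg fun x _ => hR.1 x) (hR.sum_le_one A)
    _ ≤ klDiv R P := binKLDiv_le_klDiv hR hP.2 hPpos A

/-- `D(R‖P) ≥ (φ(max_A min{P(A),1−P(A)}) ⬝ minₓ P(x) / 2) ⬝ χ²(R‖P)`. -/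
theorem kl_ge_phi_min_mul_chiSq
    {𝒳 : Type*} [Fintype 𝒳] [Nonempty 𝒳] (hcard : 2 ≤ Fintype.card 𝒳)
    (R P : 𝒳 → ℝ) (hR : IsPmf R) (hP : IsPmf P) (hPpos : ∀ x, 0 < P x) :
    phiFun (balSep P) * Finset.univ.inf' Finset.univ_nonempty P / 2 * chiSq R P
      ≤ klDiv R P :=
  kl_ge_phi_min_mul_chiSq_general R P hR hP hPpos
end

section
/- For every t ∈ (0,∞), 2t(t+2)·log(t) − (5t+1)(t−1) ≥ 0. (Equivalently, the function f(t)=t·log(t) satisfies the condition (f(t) − f'(1)(t−1))·(1 − (f'''(1)/(3f''(1)))(t−1)) ≥ (f''(1)/2)(t−1)² for every t∈(0,∞), where f'(1)=1, f''(1)=1, f'''(1)=−1.) -/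
/-! Dividing by `2t(t+2) > 0`, the claim is `log t ≥ (5t+1)(t-1) / (2t(t+2))`. The difference
`log t - (5t+1)(t-1) / (2t(t+2))` vanishes at `t = 1` and has derivative
`(t-1)³ / (t²(t+2)²)`, which changes sign from `-` to `+` at `1`; so `t = 1` is its minimum. -/

open Set

theorem le_of_hasDerivAt_nonpos_nonneg {f f' : ℝ → ℝ} {a c x : ℝ}
    (hf : ∀ y ∈ Ioi a, HasDerivAt f (f' y) y) (hneg : ∀ y ∈ Ioo a c, f' y ≤ 0)
    (hpos : ∀ y ∈ Ioi c, 0 ≤ f' y) (hac : a < c) (hx : a < x) : f c ≤ f x := by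
  have hcont {b : ℝ} (hb : a < b) (d : ℝ) : ContinuousOn f (Icc b d) := fun y hy ↦
    (hf y (hb.trans_le hy.1)).continuousAt.continuousWithinAt
  rcases le_total x c with hxc | hcx
  · refine antitoneOn_of_hasDerivWithinAt_nonpos (f' := f') (convex_Icc x c) (hcont hx c)
      (fun y hy ↦ ?_) (fun y hy ↦ ?_) (left_mem_Icc.2 hxc) (right_mem_Icc.2 hxc) hxc
    all_goals rw [interior_Icc] at hy
    · exact (hf y (hx.trans hy.1)).hasDerivWithinAt
    · exact hneg y ⟨hx.trans hy.1, hy.2⟩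
  · refine monotoneOn_of_hasDerivWithinAt_nonneg (f' := f') (convex_Icc c x) (hcont hac x)
      (fun y hy ↦ ?_) (fun y hy ↦ ?_) (left_mem_Icc.2 hcx) (right_mem_Icc.2 hcx) hcx
    all_goals rw [interior_Icc] at hy
    · exact (hf y (hac.trans hy.1)).hasDerivWithinAt
    · exact hpos y hy.1

theorem hasDerivAt_log_sub_div (t : ℝ) (ht : 0 < t) :
    HasDerivAt (fun x ↦ Real.log x - (5 * x + 1) * (x - 1) / (2 * x * (x + 2)))
      ((t - 1) ^ 3 / (t ^ 2 * (t + 2) ^ 2)) t := by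
  have hnum :=
    (((hasDerivAt_id' t).const_mul 5).add_const 1).fun_mul ((hasDerivAt_id' t).sub_const 1)
  have hden := ((hasDerivAt_id' t).const_mul 2).fun_mul ((hasDerivAt_id' t).add_const 2)
  refine ((Real.hasDerivAt_log ht.ne').fun_sub (hnum.fun_div hden (by positivity))).congr_deriv ?_
  field_simp
  ring

/-- For every `t ∈ (0,∞)`, `2t(t+2) log t − (5t+1)(t−1) ≥ 0`. -/
theorem two_t_log_ineq (t : ℝ) (ht : 0 < t) :
    0 ≤ 2 * t * (t + 2) * Real.log t - (5 * t + 1) * (t - 1) := by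
  have hmin := le_of_hasDerivAt_nonpos_nonneg (a := 0) (c := 1) hasDerivAt_log_sub_div
    (fun y hy ↦ div_nonpos_of_nonpos_of_nonneg (Odd.pow_nonpos (by decide) (by linarith [hy.2]))
      (by positivity))
    (fun y hy ↦ div_nonneg (pow_nonneg (by linarith [mem_Ioi.1 hy]) 3) (by positivity)) one_pos ht
  have hpos : 0 < 2 * t * (t + 2) := by positivity
  simp only [Real.log_one, sub_self, mul_zero, zero_div] at hmin
  rw [sub_nonneg, div_le_iff₀ hpos] at hmin
  linarith
end
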